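/- arXiv:2302.02563 — 6 statements merged into one kernel-verified Lean document; each statement's English description precedes it below -/
import Mathlib

section
/- If A and B are real n×n matrices with A positive semidefinite and A B^T − B A B^T positive semidefinite, then A − B A is positive semidefinite. -/
open Matrix

/-- If `A` is symmetric positive semidefinite (in the quadratic-form sense) and
`A * Bᵀ - B * A * Bᵀ` is positive semidefinite, then `A - B * A` is positive semidefinite. -/
theorem stmt_0 {n : ℕ} (A B : Matrix (Fin n) (Fin n) ℝ)
    (hAsymm : Aᵀ = A)
    (hApsd : ∀ x : Fin n → ℝ, 0 ≤ x ⬝ᵥ (A *ᵥ x))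
    (hpsd : ∀ x : Fin n → ℝ, 0 ≤ x ⬝ᵥ ((A * Bᵀ - B * A * Bᵀ) *ᵥ x)) :
    ∀ x : Fin n → ℝ, 0 ≤ x ⬝ᵥ ((A - B * A) *ᵥ x) := by
  intro x
  set y := Bᵀ *ᵥ x with hy
  have hsym : ∀ u v : Fin n → ℝ, u ⬝ᵥ (A *ᵥ v) = v ⬝ᵥ (A *ᵥ u) := by
    intro u v
    rw [dotProduct_mulVec, ← mulVec_transpose, hAsymm, dotProduct_comm]
  have e1 : x ⬝ᵥ ((A * Bᵀ) *ᵥ x) = x ⬝ᵥ (A *ᵥ y) := by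
    rw [← mulVec_mulVec, hy]
  have e2 : x ⬝ᵥ ((B * A * Bᵀ) *ᵥ x) = y ⬝ᵥ (A *ᵥ y) := by
    rw [Matrix.mul_assoc, ← mulVec_mulVec, ← mulVec_mulVec,
      dotProduct_mulVec x B, ← mulVec_transpose, hy]
  have e3 : x ⬝ᵥ ((B * A) *ᵥ x) = x ⬝ᵥ (A *ᵥ y) := by
    rw [← mulVec_mulVec, dotProduct_mulVec x B, ← mulVec_transpose,
      ← hy, hsym x y, hy]
  have h1 : 0 ≤ x ⬝ᵥ (A *ᵥ y) - y ⬝ᵥ (A *ᵥ y) := by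
    have := hpsd x
    rwa [sub_mulVec, dotProduct_sub, e1, e2] at this
  have h2 : 0 ≤ x ⬝ᵥ (A *ᵥ x) - 2 * (x ⬝ᵥ (A *ᵥ y)) + y ⬝ᵥ (A *ᵥ y) := by
    have := hApsd (x - y)
    rw [mulVec_sub, dotProduct_sub, sub_dotProduct, sub_dotProduct,
      hsym y x] at this
    linarith
  rw [sub_mulVec, dotProduct_sub, e3]
  linarith
end

section
/- Let W ∈ ℝ^{n×p} and U ∈ ℝ^{p×n} with p ≥ n, let Σ ∈ ℝ^{n×n} be symmetric positive definite, and let γ > 0. If (I − WU)Σ U^T = γ W and W^T (I − WU) Σ = γ U, then U = W^T. -/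
open Matrix

/-!
Multiplying the first equation by `Wᵀ` on the right gives `(I - WU) Σ (WU)ᵀ = γ W Wᵀ`, a symmetric
matrix; comparing with its transpose shows `Σ (WU)ᵀ = WU Σ`, so `M = (I - WU) Σ` is symmetric. The two
equations then read `M Uᵀ = γ W` and `M W = γ Uᵀ`, whence `M (Uᵀ - W) = -γ (Uᵀ - W)`. But `-γ` is not an
eigenvalue of `M`: if `M v = -γ v` then `Wᵀ v = -U v`, so `Σ (v + UᵀU v) = -γ v`, and pairing with
`v + UᵀU v` gives a negative value of the positive definite form `Σ`.
-/

section

variable {R m k : Type*} [Fintype m] [Fintype k] [DecidableEq m]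

theorem mul_transpose_eq_of_transpose_eq [CommRing R] {S A : Matrix m m R} (hS : Sᵀ = S)
    (h : ((1 - A) * S * Aᵀ)ᵀ = (1 - A) * S * Aᵀ) : S * Aᵀ = A * S := by
  rw [transpose_mul, transpose_mul, transpose_transpose, hS, transpose_sub, transpose_one] at h
  simp only [mul_sub, sub_mul, mul_one, one_mul, Matrix.mul_assoc] at h
  exact (sub_left_inj.mp h).symm

theorem mul_transpose_eq_of_critical [CommRing R] {γ : R} {S : Matrix m m R} (hS : Sᵀ = S)
    {W : Matrix m k R} {U : Matrix k m R} (h1 : (1 - W * U) * S * Uᵀ = γ • W) :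
    S * (W * U)ᵀ = W * U * S := by
  have hWWt : (1 - W * U) * S * (W * U)ᵀ = γ • (W * Wᵀ) := by
    rw [transpose_mul, ← Matrix.mul_assoc, h1, smul_mul]
  refine mul_transpose_eq_of_transpose_eq hS ?_
  rw [hWWt, transpose_smul, transpose_mul, transpose_transpose]

theorem eq_zero_of_mulVec_eq_neg_smul {γ : ℝ} (hγ : 0 < γ) {S : Matrix m m ℝ} (hS : S.PosDef)
    {W : Matrix m k ℝ} {U : Matrix k m ℝ} (hcomm : S * (W * U)ᵀ = W * U * S)
    (hUM : U * ((1 - W * U) * S) = γ • Wᵀ) {v : m → ℝ}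
    (hv : ((1 - W * U) * S) *ᵥ v = -γ • v) : v = 0 := by
  have hWv : Wᵀ *ᵥ v = -(U *ᵥ v) := by
    have h : γ • (Wᵀ *ᵥ v) = γ • -(U *ᵥ v) := by
      rw [← smul_mulVec, ← hUM, ← mulVec_mulVec, hv, mulVec_smul, neg_smul, smul_neg]
    exact smul_right_injective _ hγ.ne' h
  set w := v + Uᵀ *ᵥ (U *ᵥ v)
  have hSw : S *ᵥ w = -γ • v := by
    rw [← hv, sub_mul, one_mul, ← hcomm, transpose_mul, sub_mulVec, ← mulVec_mulVec,
      ← mulVec_mulVec, hWv, mulVec_neg, mulVec_neg, sub_neg_eq_add, ← mulVec_add]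
  have hwv : w ⬝ᵥ v = v ⬝ᵥ v + (U *ᵥ v) ⬝ᵥ (U *ᵥ v) := by
    rw [add_dotProduct, mulVec_transpose, ← dotProduct_mulVec]
  by_contra hv0
  have hvv : 0 < v ⬝ᵥ v := by simpa using dotProduct_self_star_pos_iff.mpr hv0
  have hUv : 0 ≤ (U *ᵥ v) ⬝ᵥ (U *ᵥ v) := by simpa using dotProduct_self_star_nonneg (U *ᵥ v)
  have hpos : 0 ≤ w ⬝ᵥ (S *ᵥ w) := by simpa using hS.posSemidef.dotProduct_mulVec_nonneg w
  rw [hSw, dotProduct_smul, hwv, smul_eq_mul] at hpos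
  nlinarith

end

theorem stmt_2_general {n p : ℕ} (γ : ℝ) (hγ : 0 < γ)
    (Sig : Matrix (Fin n) (Fin n) ℝ) (hSig : Sig.PosDef)
    (W : Matrix (Fin n) (Fin p) ℝ) (U : Matrix (Fin p) (Fin n) ℝ)
    (h1 : (1 - W * U) * Sig * Uᵀ = γ • W)
    (h2 : Wᵀ * (1 - W * U) * Sig = γ • U) :
    U = Wᵀ := by
  have hSt : Sigᵀ = Sig := (isHermitian_iff_isSymm.mp hSig.1).eq
  have hcomm := mul_transpose_eq_of_critical hSt h1
  have hMt : ((1 - W * U) * Sig)ᵀ = (1 - W * U) * Sig := by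
    rw [transpose_mul, hSt, transpose_sub, transpose_one, mul_sub, mul_one, hcomm, sub_mul,
      one_mul]
  rw [Matrix.mul_assoc] at h2
  set M := (1 - W * U) * Sig
  have hUM : U * M = γ • Wᵀ := by
    simpa [transpose_mul, hMt] using congrArg transpose h1
  have hMW : M * W = γ • Uᵀ := by
    simpa [transpose_mul, hMt] using congrArg transpose h2
  have hMD : M * (Uᵀ - W) = -γ • (Uᵀ - W) := by
    rw [Matrix.mul_sub, h1, hMW, smul_sub, neg_smul, neg_smul, sub_neg_eq_add, neg_add_eq_sub]
  have hD : Uᵀ - W = 0 := by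
    ext i j
    exact congrFun (eq_zero_of_mulVec_eq_neg_smul hγ hSig hcomm hUM
      (v := fun i => (Uᵀ - W) i j) (funext fun i => congrFun (congrFun hMD i) j)) i
  rw [← transpose_transpose U, sub_eq_zero.mp hD]

/-- At critical points of the regularized two-layer linear autoencoder loss,
the two weight matrices are transposes of each other: if
`(I - W*U) * Σ * Uᵀ = γ • W` and `Wᵀ * (I - W*U) * Σ = γ • U`, then `U = Wᵀ`. -/
theorem stmt_2 {n p : ℕ} (hpn : n ≤ p) (γ : ℝ) (hγ : 0 < γ)
    (Sig : Matrix (Fin n) (Fin n) ℝ) (hSig : Sig.PosDef)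
    (W : Matrix (Fin n) (Fin p) ℝ) (U : Matrix (Fin p) (Fin n) ℝ)
    (h1 : (1 - W * U) * Sig * Uᵀ = γ • W)
    (h2 : Wᵀ * (1 - W * U) * Sig = γ • U) :
    U = Wᵀ :=
  stmt_2_general γ hγ Sig hSig W U h1 h2
end

section
/- Let Σ ∈ ℝ^{n×n} be symmetric positive definite with all eigenvalues greater than γ > 0, and let W ∈ ℝ^{n×p} (p ≥ n) satisfy W W^T = I − γ Σ^{-1}, with U = W^T. Then the pair (U, W) satisfies the critical point equations (I − WU)Σ U^T = γ W and W^T(I − WU)Σ = γ U. -/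
open Matrix

/-- Points with `W * Wᵀ = I - γ Σ⁻¹` and `U = Wᵀ` satisfy the critical point
equations of the regularized two-layer linear autoencoder. -/
theorem stmt_5 {n p : ℕ} (hpn : n ≤ p) (γ : ℝ) (hγ : 0 < γ)
    (Sig : Matrix (Fin n) (Fin n) ℝ) (hSig : Sig.PosDef)
    (hEig : (Sig - γ • (1 : Matrix (Fin n) (Fin n) ℝ)).PosDef)
    (W : Matrix (Fin n) (Fin p) ℝ) (U : Matrix (Fin p) (Fin n) ℝ)
    (hW : W * Wᵀ = 1 - γ • Sig⁻¹) (hU : U = Wᵀ) :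
    (1 - W * U) * Sig * Uᵀ = γ • W ∧ Wᵀ * (1 - W * U) * Sig = γ • U := by
  have hinv : Sig⁻¹ * Sig = 1 := Matrix.nonsing_inv_mul _ (isUnit_iff_ne_zero.mpr hSig.det_pos.ne')
  have h1 : (1 : Matrix (Fin n) (Fin n) ℝ) - W * U = γ • Sig⁻¹ := by
    rw [hU, hW]; abel
  constructor
  · rw [h1, hU, Matrix.transpose_transpose, Matrix.smul_mul, Matrix.smul_mul,
      hinv, Matrix.one_mul]
  · rw [Matrix.mul_assoc, h1, Matrix.smul_mul, Matrix.mul_smul, hU,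
      hinv, Matrix.mul_one]
end

section
/- The dimension of the real vector space {W̃ W̃^T Ω W̃ + K W̃_⊥ : Ω ∈ ℝ^{n×n} skew-symmetric, K ∈ ℝ^{n×(p−n)}} equals np − n(n+1)/2, given that W̃ ∈ ℝ^{n×p} has rank n, W̃_⊥ ∈ ℝ^{(p−n)×p} has rank p−n, and the rows of W̃_⊥ are orthogonal to the rows of W̃. -/
/-!
The parametrization `(Ω, K) ↦ W̃ W̃ᵀ Ω W̃ + K W̃⊥` is linear and injective: multiplying on the right
by `W̃ᵀ` kills the `K`-term (the rows of `W̃⊥` are orthogonal to those of `W̃`) and leaves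
`(W̃ W̃ᵀ) Ω (W̃ W̃ᵀ)`, from which `Ω` is recovered since the Gram matrix `W̃ W̃ᵀ` is invertible;
then `K W̃⊥ = 0` forces `K = 0` because `W̃⊥ W̃⊥ᵀ` is invertible. Hence the dimension is that of
the skew-symmetric `n × n` matrices, `n(n-1)/2`, plus `n(p-n)`.
-/

open Matrix

namespace Matrix

theorem isUnit_of_rank_eq_card {K m : Type*} [Field K] [Fintype m] [DecidableEq m]
    {A : Matrix m m K} (h : A.rank = Fintype.card m) : IsUnit A := by
  rw [← mulVec_surjective_iff_isUnit]
  show Function.Surjective A.mulVecLin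
  rw [← LinearMap.range_eq_top]
  apply Submodule.eq_top_of_finrank_eq
  rw [← rank, h, Module.finrank_fintype_fun_eq_card]

theorem isUnit_det_mul_transpose_of_rank_eq {K m q : Type*} [Field K] [LinearOrder K]
    [IsStrictOrderedRing K] [Fintype m] [Fintype q] [DecidableEq m] {A : Matrix m q K}
    (h : A.rank = Fintype.card m) : IsUnit (A * Aᵀ).det :=
  (isUnit_iff_isUnit_det _).mp (isUnit_of_rank_eq_card (by rw [rank_self_mul_transpose, h]))

section SkewSymmetric

variable (R : Type*) [CommRing R]

def skewSymmetric (n : Type*) : Submodule R (Matrix n n R) where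
  carrier := {Ω | Ωᵀ = -Ω}
  add_mem' {Ω Ω'} hΩ hΩ' := by
    simp only [Set.mem_ofPred_eq, transpose_add, neg_add] at *
    rw [hΩ, hΩ']
  zero_mem' := by simp
  smul_mem' c Ω hΩ := by
    simp only [Set.mem_ofPred_eq, transpose_smul] at *
    rw [hΩ, smul_neg]

variable {R}

theorem skewSymmetric_apply_swap {n : Type*} {Ω : Matrix n n R} (hΩ : Ω ∈ skewSymmetric R n)
    (i j : n) : Ω j i = -Ω i j :=
  congrFun (congrFun hΩ i) j

theorem skewSymmetric_apply_self [IsAddTorsionFree R] {n : Type*} {Ω : Matrix n n R}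
    (hΩ : Ω ∈ skewSymmetric R n) (i : n) : Ω i i = 0 :=
  self_eq_neg.mp (skewSymmetric_apply_swap hΩ i i)

def skewSymmetricLowerEntries (n : ℕ) :
    skewSymmetric R (Fin n) →ₗ[R] ((Σ i : Fin n, Fin i) → R) where
  toFun Ω x := Ω.1 x.1 (Fin.castLE x.1.isLt.le x.2)
  map_add' _ _ := rfl
  map_smul' _ _ := rfl

theorem skewSymmetricLowerEntries_injective [IsAddTorsionFree R] (n : ℕ) :
    Function.Injective (skewSymmetricLowerEntries (R := R) n) := by
  rw [← LinearMap.ker_eq_bot, LinearMap.ker_eq_bot']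
  rintro ⟨Ω, hΩ⟩ hzero
  have lower {i j : Fin n} (hji : j < i) : Ω i j = 0 := congrFun hzero ⟨i, ⟨j, hji⟩⟩
  refine Subtype.ext (Matrix.ext fun i j => ?_)
  show Ω i j = 0
  rcases lt_trichotomy j i with hji | rfl | hij
  · exact lower hji
  · exact skewSymmetric_apply_self hΩ j
  · rw [skewSymmetric_apply_swap hΩ j i, lower hij]
    simp

theorem skewSymmetricLowerEntries_surjective (n : ℕ) :
    Function.Surjective (skewSymmetricLowerEntries (R := R) n) := by
  intro f
  let Ω : Matrix (Fin n) (Fin n) R := fun i j =>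
    if h : j < i then f ⟨i, ⟨j, h⟩⟩ else if h : i < j then -f ⟨j, ⟨i, h⟩⟩ else 0
  have hΩ : Ω ∈ skewSymmetric R (Fin n) := by
    ext i j
    show Ω j i = -Ω i j
    rcases lt_trichotomy i j with hij | rfl | hji
    · simp [Ω, hij, hij.not_gt]
    · simp [Ω]
    · simp [Ω, hji, hji.not_gt]
  exact ⟨⟨Ω, hΩ⟩, funext fun x => dif_pos x.2.isLt⟩

theorem finrank_skewSymmetric [StrongRankCondition R] [IsAddTorsionFree R] (n : ℕ) :
    Module.finrank R (skewSymmetric R (Fin n)) = n * (n - 1) / 2 := by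
  rw [(LinearEquiv.ofBijective _ ⟨skewSymmetricLowerEntries_injective n,
      skewSymmetricLowerEntries_surjective n⟩).finrank_eq,
    Module.finrank_fintype_fun_eq_card, Fintype.card_sigma]
  simp only [Fintype.card_fin]
  rw [Fin.sum_univ_eq_sum_range (fun i => i) n, Finset.sum_range_id]

end SkewSymmetric

section Tangent

variable {R m q k : Type*} [CommRing R] [Fintype m] [Fintype q] [Fintype k]

def tangentParam (W : Matrix m q R) (V : Matrix k q R) :
    Matrix m m R × Matrix m k R →ₗ[R] Matrix m q R where
  toFun x := W * Wᵀ * x.1 * W + x.2 * V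
  map_add' x y := by
    simp only [Prod.fst_add, Prod.snd_add, Matrix.mul_add, Matrix.add_mul]
    abel
  map_smul' c x := by
    simp only [Prod.smul_fst, Prod.smul_snd, Matrix.mul_smul, Matrix.smul_mul, smul_add,
      RingHom.id_apply]

theorem tangentParam_injective [DecidableEq m] [DecidableEq k] {W : Matrix m q R}
    {V : Matrix k q R} (hW : IsUnit (W * Wᵀ).det) (hV : IsUnit (V * Vᵀ).det)
    (hVW : V * Wᵀ = 0) : Function.Injective (tangentParam W V) := by
  rw [← LinearMap.ker_eq_bot, LinearMap.ker_eq_bot']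
  rintro ⟨Ω, K⟩ h
  have h0 : W * Wᵀ * Ω * W + K * V = 0 := h
  have hΩ : Ω = 0 := by
    have hGram : W * Wᵀ * Ω * (W * Wᵀ) = 0 := by
      simpa [Matrix.add_mul, Matrix.mul_assoc, hVW] using congrArg (· * Wᵀ) h0
    rw [Matrix.mul_assoc] at hGram
    have hΩGram : Ω * (W * Wᵀ) = 0 :=
      mul_right_injective_of_inv _ _ (nonsing_inv_mul _ hW) (by simpa using hGram)
    exact mul_left_injective_of_inv _ _ (mul_nonsing_inv _ hW) (by simpa using hΩGram)
  have hK : K * V = 0 := by simpa [hΩ] using h0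
  refine Prod.ext hΩ (mul_left_injective_of_inv _ _ (mul_nonsing_inv _ hV) ?_)
  simp [← Matrix.mul_assoc, hK]

end Tangent

end Matrix

theorem Nat.div_two_add_mul_sub_eq {n p : ℕ} (h : n ≤ p) :
    n * (n - 1) / 2 + n * (p - n) = n * p - n * (n + 1) / 2 := by
  have htri : n * (n + 1) / 2 = n * (n - 1) / 2 + n := by
    simpa [Nat.mul_comm] using Nat.triangle_succ n
  have hsq : n * (n - 1) / 2 * 2 + n = n * n := by
    rw [Nat.div_mul_cancel (Nat.even_mul_pred_self n).two_dvd]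
    cases n <;> simp [Nat.mul_succ]
  have hsplit : n * (p - n) + n * n = n * p := by rw [← Nat.mul_add, Nat.sub_add_cancel h]
  omega

theorem stmt_7_general {n p : ℕ}
    (W : Matrix (Fin n) (Fin p) ℝ) (hWrank : W.rank = n)
    (Wperp : Matrix (Fin (p - n)) (Fin p) ℝ) (hWperprank : Wperp.rank = p - n)
    (hperp : Wperp * Wᵀ = 0) :
    Module.finrank ℝ ↥(Submodule.span ℝ
      {T : Matrix (Fin n) (Fin p) ℝ |
        ∃ (Ω : Matrix (Fin n) (Fin n) ℝ) (K : Matrix (Fin n) (Fin (p - n)) ℝ),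
          Ωᵀ = -Ω ∧ T = W * Wᵀ * Ω * W + K * Wperp})
      = n * p - n * (n + 1) / 2 := by
  have hpn : n ≤ p := hWrank ▸ W.rank_le_width
  let L := tangentParam W Wperp ∘ₗ (skewSymmetric ℝ (Fin n)).subtype.prodMap LinearMap.id
  have hL : Function.Injective L :=
    (tangentParam_injective
      (isUnit_det_mul_transpose_of_rank_eq (by rw [hWrank, Fintype.card_fin]))
      (isUnit_det_mul_transpose_of_rank_eq (by rw [hWperprank, Fintype.card_fin])) hperp).comp
      (Subtype.val_injective.prodMap Function.injective_id)
  have hrange : {T : Matrix (Fin n) (Fin p) ℝ |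
        ∃ (Ω : Matrix (Fin n) (Fin n) ℝ) (K : Matrix (Fin n) (Fin (p - n)) ℝ),
          Ωᵀ = -Ω ∧ T = W * Wᵀ * Ω * W + K * Wperp} = LinearMap.range L := by
    ext T
    constructor
    · rintro ⟨Ω, K, hΩ, rfl⟩
      exact ⟨(⟨Ω, hΩ⟩, K), rfl⟩
    · rintro ⟨⟨Ω, K⟩, rfl⟩
      exact ⟨Ω, K, Ω.2, rfl⟩
  rw [hrange, Submodule.span_eq, LinearMap.finrank_range_of_inj hL, Module.finrank_prod,
    finrank_skewSymmetric, Module.finrank_matrix, Fintype.card_fin, Fintype.card_fin,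
    Module.finrank_self, mul_one, Nat.div_two_add_mul_sub_eq hpn]

/-- The tangent space `{W̃ W̃ᵀ Ω W̃ + K W̃⊥}` has dimension `np − n(n+1)/2`. -/
theorem stmt_7 {n p : ℕ} (hpn : n ≤ p)
    (W : Matrix (Fin n) (Fin p) ℝ) (hWrank : W.rank = n)
    (Wperp : Matrix (Fin (p - n)) (Fin p) ℝ) (hWperprank : Wperp.rank = p - n)
    (hperp : Wperp * Wᵀ = 0) :
    Module.finrank ℝ ↥(Submodule.span ℝ
      {T : Matrix (Fin n) (Fin p) ℝ |
        ∃ (Ω : Matrix (Fin n) (Fin n) ℝ) (K : Matrix (Fin n) (Fin (p - n)) ℝ),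
          Ωᵀ = -Ω ∧ T = W * Wᵀ * Ω * W + K * Wperp})
      = n * p - n * (n + 1) / 2 :=
  stmt_7_general W hWrank Wperp hWperprank hperp
end

section
/- Let s_i ≥ s_j > γ > 0 with i < j (so s_i ≥ s_j), b = (1/γ − (s_i+s_j)/(2 s_i s_j))(s_i − s_j), κ_{ij} = −(√(1+b²) − b), and κ_{ji} = √(1+b²) − b. Then Z_{ij} = κ_{ij} v_i v_j^T + v_j v_i^T satisfies −γ Z_{ij}^T + 2 Z_{ij} Σ − γ Σ^{-1} Z_{ij} Σ = λ_{ij} Z_{ij} with λ_{ij} = 2 s_i − γ(s_i/s_j + κ_{ij}), where v_i, v_j are orthonormal eigenvectors of Σ with eigenvalues s_i, s_j. -/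
/-!
With `A = v_i v_jᵀ` and `B = v_j v_iᵀ`, right multiplication by `Σ` and left multiplication by
`Σ⁻¹` act on these rank-one matrices through the eigenvalues, while transposition swaps them.
So the operator `Z ↦ -γ Zᵀ + 2 Z Σ - γ Σ⁻¹ Z Σ` preserves `span {A, B}`, and `κ A + B` is an
eigenvector exactly when `κ` is a root of `x² - 2 b x - 1`, which `κ = b - √(1 + b²)` is.
-/

open Matrix

namespace Matrix

section CommRing

variable {m R : Type*} [Fintype m] [CommRing R]

theorem mul_vecMulVec_of_mulVec_eq_smul {M : Matrix m m R} {u w : m → R} {s : R}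
    (hu : M *ᵥ u = s • u) : M * vecMulVec u w = s • vecMulVec u w := by
  rw [mul_vecMulVec, hu, smul_vecMulVec]

theorem vecMulVec_mul_of_mulVec_eq_smul {M : Matrix m m R} {u w : m → R} {s : R}
    (hM : M.IsSymm) (hw : M *ᵥ w = s • w) : vecMulVec u w * M = s • vecMulVec u w := by
  rw [vecMulVec_mul, ← mulVec_transpose, hM.eq, hw, vecMulVec_smul]

variable [DecidableEq m]

noncomputable def hessianAction (γ : R) (S Z : Matrix m m R) : Matrix m m R :=
  (-γ) • Zᵀ + (2 : R) • (Z * S) - γ • (S⁻¹ * Z * S)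

theorem hessianAction_smul_add (γ c : R) (S X Y : Matrix m m R) :
    hessianAction γ S (c • X + Y) = c • hessianAction γ S X + hessianAction γ S Y := by
  simp only [hessianAction, transpose_add, transpose_smul, add_mul, mul_add, smul_mul_assoc,
    Matrix.mul_smul]
  module

end CommRing

section Field

variable {m K : Type*} [Fintype m] [DecidableEq m] [Field K]

theorem inv_mulVec_of_mulVec_eq_smul {M : Matrix m m K} {v : m → K} {s : K}
    (hM : IsUnit M) (hv : M *ᵥ v = s • v) : M⁻¹ *ᵥ v = s⁻¹ • v := by
  have hv' : v = s • (M⁻¹ *ᵥ v) := by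
    rw [← mulVec_smul, ← hv, mulVec_mulVec, nonsing_inv_mul _ ((isUnit_iff_isUnit_det M).mp hM),
      one_mulVec]
  rcases eq_or_ne s 0 with rfl | hs
  · rw [zero_smul] at hv'
    simp [hv']
  · conv_rhs => rw [hv', inv_smul_smul₀ hs]

theorem hessianAction_vecMulVec (γ p q : K) {S : Matrix m m K} (hS : S.IsSymm) (hSu : IsUnit S)
    {u w : m → K} (hu : S *ᵥ u = p • u) (hw : S *ᵥ w = q • w) :
    hessianAction γ S (vecMulVec u w)
      = (2 * q - γ * (q / p)) • vecMulVec u w - γ • vecMulVec w u := by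
  have hleft : S⁻¹ * vecMulVec u w = p⁻¹ • vecMulVec u w :=
    mul_vecMulVec_of_mulVec_eq_smul (inv_mulVec_of_mulVec_eq_smul hSu hu)
  have hright : vecMulVec u w * S = q • vecMulVec u w := vecMulVec_mul_of_mulVec_eq_smul hS hw
  rw [hessianAction, transpose_vecMulVec, hleft, smul_mul_assoc, hright, div_eq_mul_inv]
  module

end Field

end Matrix

theorem sub_sqrt_one_add_sq_sq (b : ℝ) :
    (b - √(1 + b ^ 2)) ^ 2 = 2 * b * (b - √(1 + b ^ 2)) + 1 := by
  linear_combination Real.sq_sqrt (by positivity : (0 : ℝ) ≤ 1 + b ^ 2)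

theorem stmt_10_general {n : ℕ} (γ si sj : ℝ) (hγ : 0 < γ) (hsj : γ < sj) (hij : sj ≤ si)
    (b κ : ℝ) (hb : b = (1 / γ - (si + sj) / (2 * si * sj)) * (si - sj))
    (hκ : κ = -(Real.sqrt (1 + b ^ 2) - b))
    (Sig : Matrix (Fin n) (Fin n) ℝ) (hSig : Sig.PosDef)
    (vi vj : Fin n → ℝ)
    (heigi : Sig *ᵥ vi = si • vi) (heigj : Sig *ᵥ vj = sj • vj)
    (Z : Matrix (Fin n) (Fin n) ℝ) (hZ : Z = κ • vecMulVec vi vj + vecMulVec vj vi) :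
    (-γ) • Zᵀ + (2 : ℝ) • (Z * Sig) - γ • (Sig⁻¹ * Z * Sig)
      = (2 * si - γ * (si / sj + κ)) • Z := by
  have hγ0 : γ ≠ 0 := hγ.ne'
  have hsj0 : sj ≠ 0 := (hγ.trans hsj).ne'
  have hsi0 : si ≠ 0 := (hγ.trans_le (hsj.le.trans hij)).ne'
  have hS : Sig.IsSymm := isHermitian_iff_isSymm.mp hSig.isHermitian
  have hκ_root : κ ^ 2 = 2 * b * κ + 1 := by
    rw [hκ, neg_sub]
    exact sub_sqrt_one_add_sq_sq b
  have hb' : 2 * γ * si * sj * b = (si - sj) * (2 * si * sj - γ * (si + sj)) := by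
    rw [hb]
    field_simp
  change hessianAction γ Sig Z = _
  rw [hZ, hessianAction_smul_add, hessianAction_vecMulVec γ si sj hS hSig.isUnit heigi heigj,
    hessianAction_vecMulVec γ sj si hS hSig.isUnit heigj heigi]
  match_scalars
  · field_simp
    linear_combination (γ * si * sj) * hκ_root + κ * hb'
  · field_simp
    ring

/-- Off-diagonal Hessian eigenvectors: `Z = κ v_i v_jᵀ + v_j v_iᵀ` satisfies
`-γ Zᵀ + 2 Z Σ - γ Σ⁻¹ Z Σ = λ Z` with `λ = 2 s_i - γ (s_i / s_j + κ)`. -/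
theorem stmt_10 {n : ℕ} (γ si sj : ℝ) (hγ : 0 < γ) (hsj : γ < sj) (hij : sj ≤ si)
    (b κ : ℝ) (hb : b = (1 / γ - (si + sj) / (2 * si * sj)) * (si - sj))
    (hκ : κ = -(Real.sqrt (1 + b ^ 2) - b))
    (Sig : Matrix (Fin n) (Fin n) ℝ) (hSig : Sig.PosDef)
    (vi vj : Fin n → ℝ)
    (hvi : vi ⬝ᵥ vi = 1) (hvj : vj ⬝ᵥ vj = 1) (horth : vi ⬝ᵥ vj = 0)
    (heigi : Sig *ᵥ vi = si • vi) (heigj : Sig *ᵥ vj = sj • vj)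
    (Z : Matrix (Fin n) (Fin n) ℝ) (hZ : Z = κ • vecMulVec vi vj + vecMulVec vj vi) :
    (-γ) • Zᵀ + (2 : ℝ) • (Z * Sig) - γ • (Sig⁻¹ * Z * Sig)
      = (2 * si - γ * (si / sj + κ)) • Z :=
  stmt_10_general γ si sj hγ hsj hij b κ hb hκ Sig hSig vi vj heigi heigj Z hZ
end

section
/- Let s_i ≥ s_j > γ > 0, b = (1/γ − (s_i+s_j)/(2 s_i s_j))(s_i − s_j), κ = √(1+b²) − b. Then 0 < κ ≤ 1 and the Hessian eigenvalues λ_{ij} = 2 s_i − γ(s_i/s_j − κ) and λ_{ji} = 2 s_j − γ(s_j/s_i + κ) satisfy λ_{ij} ≥ λ_{ji} > 0. -/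
/-- The nonzero Hessian eigenvalues on the manifold are positive:
`0 < κ ≤ 1` and `λ_{ij} ≥ λ_{ji} > 0`. -/
theorem stmt_11 (γ si sj : ℝ) (hγ : 0 < γ) (hsj : γ < sj) (hij : sj ≤ si)
    (b κ : ℝ) (hb : b = (1 / γ - (si + sj) / (2 * si * sj)) * (si - sj))
    (hκ : κ = Real.sqrt (1 + b ^ 2) - b) :
    (0 < κ ∧ κ ≤ 1) ∧
      2 * si - γ * (si / sj - κ) ≥ 2 * sj - γ * (sj / si + κ) ∧
      0 < 2 * sj - γ * (sj / si + κ) := by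
  have hsj0 : 0 < sj := hγ.trans hsj
  have hsi0 : 0 < si := hsj0.trans_le hij
  have hb0 : 0 ≤ b := by
    rw [hb]
    apply mul_nonneg _ (by linarith)
    rw [sub_nonneg, div_le_div_iff₀ (by positivity) hγ]
    nlinarith
  have h1 : (0:ℝ) ≤ 1 + b ^ 2 := by positivity
  have hs : Real.sqrt (1 + b ^ 2) ^ 2 = 1 + b ^ 2 := Real.sq_sqrt h1
  have hs0 : 0 < Real.sqrt (1 + b ^ 2) := Real.sqrt_pos.mpr (by positivity)
  have hκ0 : 0 < κ := by rw [hκ]; nlinarith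
  have hκ1 : κ ≤ 1 := by rw [hκ]; nlinarith
  have hkey : 2 * (si - sj) + γ * (sj / si - si / sj) = 2 * γ * b := by
    rw [hb]; field_simp; ring
  have hbk : b + κ = Real.sqrt (1 + b ^ 2) := by rw [hκ]; ring
  have hd : sj / si ≤ 1 := by
    rw [div_le_one hsi0]; exact hij
  refine ⟨⟨hκ0, hκ1⟩, ?_, ?_⟩
  · nlinarith [mul_pos hγ hs0]
  · nlinarith [hd]
end
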